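/- arXiv:1609.09118 — 6 statements merged into one kernel-verified Lean document; each statement's English description precedes it below -/
import Mathlib

section
/- For the digraph X of a graph G with n vertices, m edges, c connected components, and b bipartite components, the subspace ker(D_t(X)) ∩ ker(D_h(X)) of ℝ^{2m} has dimension 2m − 2n + b + c. -/
open Matrix Module LinearMap

variable {V : Type*} [Fintype V] [DecidableEq V]

/-- Tails incidence matrix of the digraph of `G` (arcs = darts of `G`). -/
def Dt (G : SimpleGraph V) : Matrix V G.Dart ℝ :=
  Matrix.of fun v d => if d.toProd.1 = v then 1 else 0

/-- Heads incidence matrix of the digraph of `G`. -/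
def Dh (G : SimpleGraph V) : Matrix V G.Dart ℝ :=
  Matrix.of fun v d => if d.toProd.2 = v then 1 else 0

/-- An orientation of `G`: a choice of one dart per edge. -/
structure GOrientation (G : SimpleGraph V) where
  pick : G.Dart → Bool
  pick_symm : ∀ d : G.Dart, pick d.symm = !pick d

def GOrientation.darts {G : SimpleGraph V} (σ : GOrientation G) : Type _ :=
  {d : G.Dart // σ.pick d}

instance {G : SimpleGraph V} [DecidableRel G.Adj] (σ : GOrientation G) :
    Fintype σ.darts := by
  unfold GOrientation.darts; infer_instance

instance {G : SimpleGraph V} (σ : GOrientation G) : DecidableEq σ.darts := by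
  unfold GOrientation.darts; infer_instance

/-- Tails incidence matrix of the orientation `σ`. -/
def Dto (G : SimpleGraph V) (σ : GOrientation G) : Matrix V σ.darts ℝ :=
  Matrix.of fun v d => if d.1.toProd.1 = v then 1 else 0

/-- Heads incidence matrix of the orientation `σ`. -/
def Dho (G : SimpleGraph V) (σ : GOrientation G) : Matrix V σ.darts ℝ :=
  Matrix.of fun v d => if d.1.toProd.2 = v then 1 else 0

/-- Unsigned incidence matrix `B = D_t + D_h` of the orientation. -/
def Bmat (G : SimpleGraph V) (σ : GOrientation G) : Matrix V σ.darts ℝ :=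
  Dto G σ + Dho G σ

/-- Signed incidence matrix `N = D_t - D_h` of the orientation. -/
def Nmat (G : SimpleGraph V) (σ : GOrientation G) : Matrix V σ.darts ℝ :=
  Dto G σ - Dho G σ

/-- Ordering of the arcs of the digraph: the oriented arcs first, then their reversals. -/
def arcFun {G : SimpleGraph V} (σ : GOrientation G) : σ.darts ⊕ σ.darts → G.Dart :=
  Sum.elim (fun d => d.1) (fun d => d.1.symm)

/-- The matrix `H = (1/√2)[[I,I],[I,-I]]`. -/
noncomputable def Hmat (α : Type*) [DecidableEq α] [Fintype α] :
    Matrix (α ⊕ α) (α ⊕ α) ℝ :=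
  (Real.sqrt 2)⁻¹ • Matrix.fromBlocks 1 1 1 (-1)

/-- Signed characteristic vector of a cycle `p` w.r.t. the orientation `σ`. -/
def cycVec (G : SimpleGraph V) (σ : GOrientation G) {u : V} (p : G.Walk u u) :
    σ.darts → ℝ :=
  fun d => if d.1 ∈ p.darts then 1 else if d.1.symm ∈ p.darts then -1 else 0

/-- Arc-reversal permutation matrix of the digraph of `G`. -/
def Pmat (G : SimpleGraph V) : Matrix G.Dart G.Dart ℝ :=
  Matrix.of fun d e => if d = e.symm then 1 else 0

section AuxProof

open SimpleGraph

variable (G : SimpleGraph V)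

/-- The bipartite-component predicate. -/
private def Bip (K : G.ConnectedComponent) : Prop :=
  (G.induce {v | G.connectedComponentMk v = K}).Colorable 2

private lemma mk_out (K : G.ConnectedComponent) :
    G.connectedComponentMk (Quot.out K) = K := Quot.out_eq K

/-- Functions alternating along edges. -/
private def Asub : Submodule ℝ (V → ℝ) where
  carrier := {h | ∀ u v, G.Adj u v → h u + h v = 0}
  add_mem' := fun {a b} ha hb u v huv => by
    have h1 := ha u v huv; have h2 := hb u v huv
    simp only [Pi.add_apply]; linarith
  zero_mem' := fun u v _ => by simp
  smul_mem' := fun r a ha u v huv => by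
    have h1 := ha u v huv
    simp only [Pi.smul_apply, smul_eq_mul]
    linear_combination r * h1

/-- Functions constant along edges. -/
private def Csub : Submodule ℝ (V → ℝ) where
  carrier := {k | ∀ u v, G.Adj u v → k u = k v}
  add_mem' := fun {a b} ha hb u v huv => by
    simp only [Pi.add_apply, ha u v huv, hb u v huv]
  zero_mem' := fun u v _ => rfl
  smul_mem' := fun r a ha u v huv => by
    simp only [Pi.smul_apply, ha u v huv]

variable {G}

private lemma asub_walk {h : V → ℝ} (hh : ∀ u v, G.Adj u v → h u + h v = 0)
    {u v : V} (p : G.Walk u v) : h v = (-1 : ℝ) ^ p.length * h u := by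
  induction p with
  | nil => simp
  | cons a p ih =>
    rw [Walk.length_cons, pow_succ]
    linear_combination ih + ((-1 : ℝ) ^ p.length) * hh _ _ a

private lemma csub_walk {k : V → ℝ} (hk : ∀ u v, G.Adj u v → k u = k v)
    {u v : V} (p : G.Walk u v) : k v = k u := by
  induction p with
  | nil => rfl
  | cons a p ih => exact ih.trans (hk _ _ a).symm

private lemma asub_ne {h : V → ℝ} (hh : ∀ u v, G.Adj u v → h u + h v = 0)
    {u v : V} (r : G.Reachable u v) (hu : h u ≠ 0) : h v ≠ 0 := by
  obtain ⟨p⟩ := r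
  rw [asub_walk hh p]
  exact mul_ne_zero (pow_ne_zero _ (by norm_num)) hu

private lemma bip_of_ne {h : V → ℝ} (hh : ∀ u v, G.Adj u v → h u + h v = 0)
    {u : V} (hu : h u ≠ 0) : Bip G (G.connectedComponentMk u) := by
  refine ⟨SimpleGraph.Coloring.mk (fun x => if 0 < h x.1 then (0 : Fin 2) else 1) ?_⟩
  rintro ⟨x, hx⟩ ⟨y, hy⟩ hadj heq
  have hxy : G.Adj x y := hadj
  have hx0 : h x ≠ 0 :=
    asub_ne hh (SimpleGraph.ConnectedComponent.exact hx).symm hu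
  have hs := hh x y hxy
  by_cases hp : 0 < h x
  · have hq : ¬ 0 < h y := by intro hq; linarith
    simp only [hp, if_true, hq, if_false] at heq
    exact absurd heq (by decide)
  · have hq : 0 < h y := by
      have hlt : h x < 0 := lt_of_le_of_ne (not_lt.mp hp) hx0
      linarith
    simp only [hp, if_false, hq, if_true] at heq
    exact absurd heq (by decide)

private lemma fin2_iff : ∀ (a b r : Fin 2), a ≠ b → ((a = r) ↔ ¬ (b = r)) := by decide

/-- Evaluation at component representatives. -/
private noncomputable def Fa : Asub G →ₗ[ℝ] ({K : G.ConnectedComponent // Bip G K} → ℝ) where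
  toFun h := fun K => h.1 (Quot.out K.1)
  map_add' _ _ := rfl
  map_smul' _ _ := rfl

private noncomputable def Fc : Csub G →ₗ[ℝ] (G.ConnectedComponent → ℝ) where
  toFun k := fun K => k.1 (Quot.out K)
  map_add' _ _ := rfl
  map_smul' _ _ := rfl

open Classical in
/-- Sign of a vertex relative to the representative of its (bipartite) component. -/
private noncomputable def sg (G : SimpleGraph V) (K : G.ConnectedComponent) (v : V)
    (hv : G.connectedComponentMk v = K) : ℝ :=
  if hK : Bip G K then
    (if hK.some ⟨v, hv⟩ = hK.some ⟨Quot.out K, mk_out G K⟩ then 1 else -1)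
  else 0

private lemma sg_adj (K : G.ConnectedComponent) (u v : V)
    (hu : G.connectedComponentMk u = K) (hv : G.connectedComponentMk v = K)
    (ha : G.Adj u v) : sg G K u hu = - sg G K v hv := by
  unfold sg
  by_cases hK : Bip G K
  · rw [dif_pos hK, dif_pos hK]
    have hne : hK.some ⟨u, hu⟩ ≠ hK.some ⟨v, hv⟩ :=
      SimpleGraph.Coloring.valid _ (by exact ha)
    have hiff := fin2_iff _ _ (hK.some ⟨Quot.out K, mk_out G K⟩) hne
    by_cases h1 : hK.some ⟨u, hu⟩ = hK.some ⟨Quot.out K, mk_out G K⟩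
    · rw [if_pos h1, if_neg (hiff.mp h1)]; norm_num
    · have h2 : hK.some ⟨v, hv⟩ = hK.some ⟨Quot.out K, mk_out G K⟩ := by
        by_contra hx; exact h1 (hiff.mpr hx)
      rw [if_neg h1, if_pos h2]
  · rw [dif_neg hK, dif_neg hK]; norm_num

open Classical in
private noncomputable def hFun (G : SimpleGraph V)
    (φ : {K : G.ConnectedComponent // Bip G K} → ℝ) (v : V) : ℝ :=
  sg G (G.connectedComponentMk v) v rfl *
    (if hK : Bip G (G.connectedComponentMk v) then φ ⟨_, hK⟩ else 0)

open Classical in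
private lemma hFun_eq (φ : {K : G.ConnectedComponent // Bip G K} → ℝ) (v : V)
    (K : G.ConnectedComponent) (hv : G.connectedComponentMk v = K) :
    hFun G φ v = sg G K v hv * (if hK : Bip G K then φ ⟨K, hK⟩ else 0) := by
  subst hv; rfl

private lemma hFun_mem (φ : {K : G.ConnectedComponent // Bip G K} → ℝ) :
    hFun G φ ∈ Asub G := by
  intro u v ha
  have hK : G.connectedComponentMk u = G.connectedComponentMk v :=
    SimpleGraph.ConnectedComponent.sound ha.reachable
  rw [hFun_eq φ u (G.connectedComponentMk v) hK, hFun_eq φ v (G.connectedComponentMk v) rfl,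
    sg_adj (G.connectedComponentMk v) u v hK rfl ha]
  ring

private lemma Fa_bij : Function.Bijective (Fa (G := G)) := by
  constructor
  · rw [injective_iff_map_eq_zero]
    intro h h0
    apply Subtype.ext
    funext v
    show h.1 v = 0
    by_contra hv
    have hbip : Bip G (G.connectedComponentMk v) := bip_of_ne h.2 hv
    have hz : h.1 (Quot.out (G.connectedComponentMk v)) = 0 :=
      congrFun h0 ⟨G.connectedComponentMk v, hbip⟩
    have hr : G.Reachable v (Quot.out (G.connectedComponentMk v)) :=
      (SimpleGraph.ConnectedComponent.exact (mk_out G (G.connectedComponentMk v))).symm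
    exact asub_ne h.2 hr hv hz
  · intro φ
    refine ⟨⟨hFun G φ, hFun_mem φ⟩, ?_⟩
    funext K
    show hFun G φ (Quot.out K.1) = φ K
    rw [hFun_eq φ _ K.1 (mk_out G K.1)]
    unfold sg
    rw [dif_pos K.2, if_pos rfl, one_mul, dif_pos K.2]

private lemma Fc_bij : Function.Bijective (Fc (G := G)) := by
  constructor
  · rw [injective_iff_map_eq_zero]
    intro k h0
    apply Subtype.ext
    funext v
    show k.1 v = 0
    have hz : k.1 (Quot.out (G.connectedComponentMk v)) = 0 :=
      congrFun h0 (G.connectedComponentMk v)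
    have hr : G.Reachable v (Quot.out (G.connectedComponentMk v)) :=
      (SimpleGraph.ConnectedComponent.exact (mk_out G (G.connectedComponentMk v))).symm
    obtain ⟨p⟩ := hr
    rw [← csub_walk k.2 p]
    exact hz
  · intro φ
    refine ⟨⟨fun v => φ (G.connectedComponentMk v), ?_⟩, ?_⟩
    · intro u v ha
      exact congrArg φ (SimpleGraph.ConnectedComponent.sound ha.reachable)
    · funext K
      show φ (G.connectedComponentMk (Quot.out K)) = φ K
      rw [mk_out]

variable (G) in
/-- The stacked matrix `[Dt; Dh]`. -/
private def Mst [DecidableRel G.Adj] : Matrix (V ⊕ V) G.Dart ℝ :=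
  Matrix.fromRows (Dt G) (Dh G)

variable [DecidableRel G.Adj]

private lemma ker_inf_eq :
    LinearMap.ker (Dt G).mulVecLin ⊓ LinearMap.ker (Dh G).mulVecLin
      = LinearMap.ker (Mst G).mulVecLin := by
  ext x
  simp only [Submodule.mem_inf, LinearMap.mem_ker, Matrix.mulVecLin_apply, Mst,
    Matrix.fromRows_mulVec]
  constructor
  · rintro ⟨h1, h2⟩
    funext i
    cases i with
    | inl a => simp [h1]
    | inr a => simp [h2]
  · intro hset
    constructor <;> funext i
    · simpa using congrFun hset (Sum.inl i)
    · simpa using congrFun hset (Sum.inr i)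

private lemma mulVecT (y : V ⊕ V → ℝ) (d : G.Dart) :
    (Mst G)ᵀ.mulVec y d = y (Sum.inl d.toProd.1) + y (Sum.inr d.toProd.2) := by
  simp [Mst, Matrix.mulVec, dotProduct, Matrix.transpose_apply, Fintype.sum_sum_type,
    Dt, Dh, ite_mul, Finset.sum_ite_eq]

private lemma mem_kerT (y : V ⊕ V → ℝ) :
    y ∈ LinearMap.ker ((Mst G)ᵀ.mulVecLin) ↔
      ∀ u v, G.Adj u v → y (Sum.inl u) + y (Sum.inr v) = 0 := by
  rw [LinearMap.mem_ker]
  constructor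
  · intro H u v huv
    have := congrFun H (⟨(u, v), huv⟩ : G.Dart)
    simp only [Matrix.mulVecLin_apply, Pi.zero_apply] at this
    rw [mulVecT] at this
    exact this
  · intro H
    funext d
    simp only [Matrix.mulVecLin_apply, Pi.zero_apply]
    rw [mulVecT]
    exact H _ _ d.adj

/-- `ker Mᵀ ≃ A × C` via `(f, g) ↦ (f + g, f - g)`. -/
private noncomputable def eKer :
    (LinearMap.ker ((Mst G)ᵀ.mulVecLin)) ≃ₗ[ℝ] (Asub G × Csub G) where
  toFun y :=
    (⟨fun v => y.1 (Sum.inl v) + y.1 (Sum.inr v), by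
        intro u v ha
        show y.1 (Sum.inl u) + y.1 (Sum.inr u) + (y.1 (Sum.inl v) + y.1 (Sum.inr v)) = 0
        have h1 := (mem_kerT y.1).mp y.2 u v ha
        have h2 := (mem_kerT y.1).mp y.2 v u ha.symm
        linarith⟩,
     ⟨fun v => y.1 (Sum.inl v) - y.1 (Sum.inr v), by
        intro u v ha
        show y.1 (Sum.inl u) - y.1 (Sum.inr u) = y.1 (Sum.inl v) - y.1 (Sum.inr v)
        have h1 := (mem_kerT y.1).mp y.2 u v ha
        have h2 := (mem_kerT y.1).mp y.2 v u ha.symm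
        linarith⟩)
  invFun p :=
    ⟨fun i => Sum.elim (fun v => (p.1.1 v + p.2.1 v) / 2) (fun v => (p.1.1 v - p.2.1 v) / 2) i, by
        rw [mem_kerT]
        intro u v ha
        have h1 := p.1.2 u v ha
        have h2 := p.2.2 u v ha
        simp only [Sum.elim_inl, Sum.elim_inr]
        linarith⟩
  map_add' y z := by
    refine Prod.ext ?_ ?_ <;> apply Subtype.ext <;> funext v <;>
      simp [Submodule.coe_add, Pi.add_apply] <;> ring
  map_smul' r y := by
    refine Prod.ext ?_ ?_ <;> apply Subtype.ext <;> funext v <;>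
      simp [Submodule.coe_smul, Pi.smul_apply, smul_eq_mul] <;> ring
  left_inv y := by
    apply Subtype.ext
    funext i
    cases i <;> simp <;> ring
  right_inv p := by
    refine Prod.ext ?_ ?_ <;> apply Subtype.ext <;> funext v <;> simp <;> ring

private lemma finrank_kerT :
    Module.finrank ℝ (LinearMap.ker ((Mst G)ᵀ.mulVecLin)) =
      Nat.card {K : G.ConnectedComponent // Bip G K} + Nat.card G.ConnectedComponent := by
  classical
  have fin1 : Finite G.ConnectedComponent :=
    Finite.of_surjective G.connectedComponentMk (fun K => Quot.exists_rep K)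
  letI := Fintype.ofFinite G.ConnectedComponent
  letI : Fintype {K : G.ConnectedComponent // Bip G K} := Fintype.ofFinite _
  rw [(eKer (G := G)).finrank_eq, Module.finrank_prod,
    (LinearEquiv.ofBijective Fa (Fa_bij (G := G))).finrank_eq,
    (LinearEquiv.ofBijective Fc (Fc_bij (G := G))).finrank_eq,
    Module.finrank_pi, Module.finrank_pi, Nat.card_eq_fintype_card, Nat.card_eq_fintype_card]

end AuxProof

theorem stmt0 (G : SimpleGraph V) [DecidableRel G.Adj]
    (n m b c : ℕ) (hn : n = Fintype.card V) (hm : m = G.edgeFinset.card)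
    (hc : c = Nat.card G.ConnectedComponent)
    (hb : b = Nat.card {K : G.ConnectedComponent //
        (G.induce {v | G.connectedComponentMk v = K}).Colorable 2}) :
    (Module.finrank ℝ
        ↥(LinearMap.ker (Dt G).mulVecLin ⊓ LinearMap.ker (Dh G).mulVecLin) : ℤ)
      = 2 * m - 2 * n + b + c := by
  classical
  have hker := ker_inf_eq (G := G)
  have hd : Fintype.card G.Dart = 2 * m := by
    rw [hm]; exact G.dart_card_eq_twice_card_edges
  have e1 : (Mst G).rank + Module.finrank ℝ (LinearMap.ker (Mst G).mulVecLin) = 2 * m := by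
    have h := LinearMap.finrank_range_add_finrank_ker (Mst G).mulVecLin
    rw [Module.finrank_pi, hd] at h
    exact h
  have e2 : ((Mst G)ᵀ).rank
      + Module.finrank ℝ (LinearMap.ker ((Mst G)ᵀ).mulVecLin) = 2 * n := by
    have h := LinearMap.finrank_range_add_finrank_ker ((Mst G)ᵀ).mulVecLin
    rw [Module.finrank_pi, Fintype.card_sum] at h
    rw [hn, two_mul]
    exact h
  have e3 : Module.finrank ℝ (LinearMap.ker ((Mst G)ᵀ).mulVecLin) = b + c := by
    rw [finrank_kerT, hc, hb]
    rfl
  have e4 : ((Mst G)ᵀ).rank = (Mst G).rank := Matrix.rank_transpose _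
  rw [hker]
  omega
end

section
/- For X the digraph of a graph G and X^σ any orientation of G, ker(D_t(X)) ∩ ker(D_h(X)) = { H·(v;w) : v ∈ ker(B(X^σ)), w ∈ ker(N(X^σ)) }, where B(X^σ) = D_t(X^σ)+D_h(X^σ), N(X^σ) = D_t(X^σ)−D_h(X^σ), and H = (1/√2)[[I,I],[I,−I]]. -/
open Matrix Module LinearMap

variable {V : Type*} [Fintype V] [DecidableEq V]

lemma Dt_sub (G : SimpleGraph V) [DecidableRel G.Adj] (σ : GOrientation G)
    (x : σ.darts ⊕ σ.darts → ℝ) :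
    ((Dt G).submatrix _root_.id (arcFun σ)).mulVec x
      = (Dto G σ).mulVec (x ∘ Sum.inl) + (Dho G σ).mulVec (x ∘ Sum.inr) := by
  funext u
  simp [Matrix.mulVec, dotProduct, Fintype.sum_sum_type, Dt, Dto, Dho, arcFun,
    SimpleGraph.Dart.symm_toProd]
  rfl

lemma Dh_sub (G : SimpleGraph V) [DecidableRel G.Adj] (σ : GOrientation G)
    (x : σ.darts ⊕ σ.darts → ℝ) :
    ((Dh G).submatrix _root_.id (arcFun σ)).mulVec x
      = (Dho G σ).mulVec (x ∘ Sum.inl) + (Dto G σ).mulVec (x ∘ Sum.inr) := by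
  funext u
  simp [Matrix.mulVec, dotProduct, Fintype.sum_sum_type, Dh, Dto, Dho, arcFun,
    SimpleGraph.Dart.symm_toProd]
  rfl

lemma Hmat_mulVec {α : Type*} [DecidableEq α] [Fintype α] (v w : α → ℝ) :
    (Hmat α).mulVec (Sum.elim v w)
      = Sum.elim ((Real.sqrt 2)⁻¹ • (v + w)) ((Real.sqrt 2)⁻¹ • (v - w)) := by
  rw [Hmat, Matrix.smul_mulVec, Matrix.fromBlocks_mulVec]
  simp only [Matrix.one_mulVec, Matrix.neg_mulVec]
  funext s
  cases s <;> simp <;> ring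

lemma inv_sqrt_two_sq : (Real.sqrt 2)⁻¹ * (Real.sqrt 2)⁻¹ = 2⁻¹ := by
  rw [← mul_inv, Real.mul_self_sqrt (by norm_num)]

theorem stmt4 (G : SimpleGraph V) [DecidableRel G.Adj] (σ : GOrientation G) :
    ((LinearMap.ker ((Dt G).submatrix _root_.id (arcFun σ)).mulVecLin ⊓
        LinearMap.ker ((Dh G).submatrix _root_.id (arcFun σ)).mulVecLin :
          Submodule ℝ (σ.darts ⊕ σ.darts → ℝ)) : Set (σ.darts ⊕ σ.darts → ℝ))
      = {x | ∃ v w, (Bmat G σ).mulVec v = 0 ∧ (Nmat G σ).mulVec w = 0 ∧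
          x = (Hmat σ.darts).mulVec (Sum.elim v w)} := by
  ext x
  simp only [Set.mem_inter_iff, SetLike.mem_coe, Submodule.mem_inf, LinearMap.mem_ker,
    Matrix.mulVecLin_apply, Set.mem_setOf_eq]
  constructor
  · rintro ⟨h1, h2⟩
    rw [Dt_sub] at h1
    rw [Dh_sub] at h2
    refine ⟨(Real.sqrt 2)⁻¹ • (x ∘ Sum.inl + x ∘ Sum.inr),
      (Real.sqrt 2)⁻¹ • (x ∘ Sum.inl - x ∘ Sum.inr), ?_, ?_, ?_⟩
    · rw [Matrix.mulVec_smul, Bmat, Matrix.add_mulVec, Matrix.mulVec_add, Matrix.mulVec_add]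
      have : (Dto G σ).mulVec (x ∘ Sum.inl) + (Dto G σ).mulVec (x ∘ Sum.inr)
          + ((Dho G σ).mulVec (x ∘ Sum.inl) + (Dho G σ).mulVec (x ∘ Sum.inr))
          = ((Dto G σ).mulVec (x ∘ Sum.inl) + (Dho G σ).mulVec (x ∘ Sum.inr))
          + ((Dho G σ).mulVec (x ∘ Sum.inl) + (Dto G σ).mulVec (x ∘ Sum.inr)) := by ring
      rw [this, h1, h2]; simp
    · rw [Matrix.mulVec_smul, Nmat, Matrix.sub_mulVec, Matrix.mulVec_sub, Matrix.mulVec_sub]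
      have : (Dto G σ).mulVec (x ∘ Sum.inl) - (Dto G σ).mulVec (x ∘ Sum.inr)
          - ((Dho G σ).mulVec (x ∘ Sum.inl) - (Dho G σ).mulVec (x ∘ Sum.inr))
          = ((Dto G σ).mulVec (x ∘ Sum.inl) + (Dho G σ).mulVec (x ∘ Sum.inr))
          - ((Dho G σ).mulVec (x ∘ Sum.inl) + (Dto G σ).mulVec (x ∘ Sum.inr)) := by ring
      rw [this, h1, h2]; simp
    · rw [Hmat_mulVec]
      funext s
      cases s with
      | inl d =>
        simp only [Sum.elim_inl, Pi.smul_apply, Pi.add_apply, Pi.sub_apply,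
          Function.comp_apply, smul_eq_mul]
        linear_combination (-2 * x (Sum.inl d)) * inv_sqrt_two_sq
      | inr d =>
        simp only [Sum.elim_inr, Pi.smul_apply, Pi.add_apply, Pi.sub_apply,
          Function.comp_apply, smul_eq_mul]
        linear_combination (-2 * x (Sum.inr d)) * inv_sqrt_two_sq
  · rintro ⟨v, w, hv, hw, rfl⟩
    rw [Hmat_mulVec]
    constructor
    · rw [Dt_sub]
      simp only [Sum.elim_comp_inl, Sum.elim_comp_inr]
      rw [Matrix.mulVec_smul, Matrix.mulVec_smul, ← smul_add, Matrix.mulVec_add,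
        Matrix.mulVec_sub]
      have : (Dto G σ).mulVec v + (Dto G σ).mulVec w
          + ((Dho G σ).mulVec v - (Dho G σ).mulVec w)
          = ((Dto G σ).mulVec v + (Dho G σ).mulVec v)
          + ((Dto G σ).mulVec w - (Dho G σ).mulVec w) := by ring
      rw [this, ← Matrix.add_mulVec, ← Matrix.sub_mulVec, ← Bmat, ← Nmat, hv, hw]; simp
    · rw [Dh_sub]
      simp only [Sum.elim_comp_inl, Sum.elim_comp_inr]
      rw [Matrix.mulVec_smul, Matrix.mulVec_smul, ← smul_add, Matrix.mulVec_add,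
        Matrix.mulVec_sub]
      have : (Dho G σ).mulVec v + (Dho G σ).mulVec w
          + ((Dto G σ).mulVec v - (Dto G σ).mulVec w)
          = ((Dto G σ).mulVec v + (Dho G σ).mulVec v)
          - ((Dto G σ).mulVec w - (Dho G σ).mulVec w) := by ring
      rw [this, ← Matrix.add_mulVec, ← Matrix.sub_mulVec, ← Bmat, ← Nmat, hv, hw]; simp
end

section
/- For X the digraph of a bipartite graph G with cycle basis 𝒞 (and orientation X^σ from one part to the other), the vectors { y_C, w_C : C ∈ 𝒞 } form a basis of ker(D_t(X)) ∩ ker(D_h(X)), where for the signed characteristic vector v_C of cycle C, w_C = (v_C; v_C) and y_C = (v_C; −v_C) under the arc ordering (oriented arcs, then reversed arcs). -/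
open Matrix Module LinearMap

variable {V : Type*} [Fintype V] [DecidableEq V]

section Aux

variable {G : SimpleGraph V} [DecidableRel G.Adj] (σ : GOrientation G)

/-- The linear map `(x, y) ↦ Sum.elim (x + y) (y - x)`. -/
def Lmap : ((σ.darts → ℝ) × (σ.darts → ℝ)) →ₗ[ℝ] (σ.darts ⊕ σ.darts → ℝ) where
  toFun p := Sum.elim (p.1 + p.2) (p.2 - p.1)
  map_add' p q := by funext d; cases d <;> simp <;> ring
  map_smul' r p := by funext d; cases d <;> simp <;> ring

lemma Lmap_ker : LinearMap.ker (Lmap σ) = ⊥ := by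
  rw [LinearMap.ker_eq_bot']
  rintro ⟨a, b⟩ h
  have h1 : ∀ d, a d + b d = 0 := fun d => congrFun h (Sum.inl d)
  have h2 : ∀ d, b d - a d = 0 := fun d => congrFun h (Sum.inr d)
  have ha : a = 0 := funext fun d => by have := h1 d; have := h2 d; simp at *; linarith
  have hb : b = 0 := funext fun d => by have := h1 d; have := h2 d; simp at *; linarith
  simp [ha, hb, Prod.ext_iff]

lemma DtSub_mulVec (x : σ.darts ⊕ σ.darts → ℝ) (v : V) :
    ((Dt G).submatrix _root_.id (arcFun σ)).mulVec x v
      = (Dto G σ).mulVec (x ∘ Sum.inl) v + (Dho G σ).mulVec (x ∘ Sum.inr) v := by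
  simp [Matrix.mulVec, dotProduct, Fintype.sum_sum_type, Dt, Dto, Dho, arcFun,
    SimpleGraph.Dart.symm]
  rfl

lemma DhSub_mulVec (x : σ.darts ⊕ σ.darts → ℝ) (v : V) :
    ((Dh G).submatrix _root_.id (arcFun σ)).mulVec x v
      = (Dho G σ).mulVec (x ∘ Sum.inl) v + (Dto G σ).mulVec (x ∘ Sum.inr) v := by
  simp [Matrix.mulVec, dotProduct, Fintype.sum_sum_type, Dh, Dto, Dho, arcFun,
    SimpleGraph.Dart.symm]
  rfl

lemma Nmat_mulVec (a : σ.darts → ℝ) (v : V) :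
    (Nmat G σ).mulVec a v = (Dto G σ).mulVec a v - (Dho G σ).mulVec a v := by
  simp [Nmat, Matrix.sub_mulVec]

variable (Y : Set V) [DecidablePred (· ∈ Y)]

lemma Dho_mulVec_zero (hσ : ∀ d : σ.darts, d.1.toProd.1 ∈ Y ∧ d.1.toProd.2 ∉ Y)
    (a : σ.darts → ℝ) {v : V} (hv : v ∈ Y) : (Dho G σ).mulVec a v = 0 := by
  simp only [Dho, Matrix.mulVec, dotProduct, Matrix.of_apply]
  refine Finset.sum_eq_zero fun d _ => ?_
  rw [if_neg, zero_mul]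
  rintro rfl
  exact (hσ d).2 hv

lemma Dto_mulVec_zero (hσ : ∀ d : σ.darts, d.1.toProd.1 ∈ Y ∧ d.1.toProd.2 ∉ Y)
    (a : σ.darts → ℝ) {v : V} (hv : v ∉ Y) : (Dto G σ).mulVec a v = 0 := by
  simp only [Dto, Matrix.mulVec, dotProduct, Matrix.of_apply]
  refine Finset.sum_eq_zero fun d _ => ?_
  rw [if_neg, zero_mul]
  rintro rfl
  exact hv (hσ d).1

lemma mem_kers_iff (hσ : ∀ d : σ.darts, d.1.toProd.1 ∈ Y ∧ d.1.toProd.2 ∉ Y)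
    (x : σ.darts ⊕ σ.darts → ℝ) :
    (((Dt G).submatrix _root_.id (arcFun σ)).mulVec x = 0 ∧
      ((Dh G).submatrix _root_.id (arcFun σ)).mulVec x = 0)
    ↔ ((Nmat G σ).mulVec (x ∘ Sum.inl) = 0 ∧ (Nmat G σ).mulVec (x ∘ Sum.inr) = 0) := by
  simp only [funext_iff, ← forall_and, Pi.zero_apply]
  refine forall_congr' fun v => ?_
  by_cases hv : v ∈ Y
  · rw [DtSub_mulVec, DhSub_mulVec, Nmat_mulVec, Nmat_mulVec,
      Dho_mulVec_zero σ Y hσ _ hv, Dho_mulVec_zero σ Y hσ _ hv]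
    constructor <;> rintro ⟨h1, h2⟩ <;> constructor <;> linarith
  · rw [DtSub_mulVec, DhSub_mulVec, Nmat_mulVec, Nmat_mulVec,
      Dto_mulVec_zero σ Y hσ _ hv, Dto_mulVec_zero σ Y hσ _ hv]
    constructor <;> rintro ⟨h1, h2⟩ <;> constructor <;> linarith

end Aux

theorem stmt7 (G : SimpleGraph V) [DecidableRel G.Adj] (σ : GOrientation G)
    (Y : Set V) [DecidablePred (· ∈ Y)]
    (hσ : ∀ d : σ.darts, d.1.toProd.1 ∈ Y ∧ d.1.toProd.2 ∉ Y)
    {ι : Type*} (c : ι → Σ u : V, G.Walk u u)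
    (hcyc : ∀ i, (c i).2.IsCycle)
    (hli : LinearIndependent ℝ fun i => cycVec G σ (c i).2)
    (hspan : Submodule.span ℝ (Set.range fun i => cycVec G σ (c i).2)
        = LinearMap.ker (Nmat G σ).mulVecLin) :
    LinearIndependent ℝ (Sum.elim
        (fun i : ι => Sum.elim (cycVec G σ (c i).2) (-(cycVec G σ (c i).2)))
        (fun i : ι => Sum.elim (cycVec G σ (c i).2) (cycVec G σ (c i).2))) ∧
    Submodule.span ℝ (Set.range (Sum.elim
        (fun i : ι => Sum.elim (cycVec G σ (c i).2) (-(cycVec G σ (c i).2)))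
        (fun i : ι => Sum.elim (cycVec G σ (c i).2) (cycVec G σ (c i).2))))
      = LinearMap.ker ((Dt G).submatrix _root_.id (arcFun σ)).mulVecLin ⊓
        LinearMap.ker ((Dh G).submatrix _root_.id (arcFun σ)).mulVecLin := by
  classical
  set K := LinearMap.ker (Nmat G σ).mulVecLin with hK
  set vv : ι → (σ.darts → ℝ) := fun i => cycVec G σ (c i).2 with hvv
  -- rewrite the family as Lmap σ composed with a simpler family
  have hF : (Sum.elim
        (fun i : ι => Sum.elim (cycVec G σ (c i).2) (-(cycVec G σ (c i).2)))
        (fun i : ι => Sum.elim (cycVec G σ (c i).2) (cycVec G σ (c i).2)))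
      = (Lmap σ) ∘ (Sum.elim (LinearMap.inl ℝ _ _ ∘ vv) (LinearMap.inr ℝ _ _ ∘ vv)) := by
    funext j
    cases j with
    | inl i => funext d; cases d <;> simp [Lmap, vv]
    | inr i => funext d; cases d <;> simp [Lmap, vv]
  have hli0 : LinearIndependent ℝ
      (Sum.elim (LinearMap.inl ℝ _ _ ∘ vv) (LinearMap.inr ℝ (σ.darts → ℝ) (σ.darts → ℝ) ∘ vv)) :=
    linearIndependent_inl_union_inr' hli hli
  have hspan0 : Submodule.span ℝ (Set.range
      (Sum.elim (LinearMap.inl ℝ _ _ ∘ vv) (LinearMap.inr ℝ (σ.darts → ℝ) (σ.darts → ℝ) ∘ vv)))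
      = K.prod K := by
    rw [Set.Sum.elim_range, Submodule.span_union, Set.range_comp, Set.range_comp,
      Submodule.span_image, Submodule.span_image, hspan, Submodule.map_inl, Submodule.map_inr,
      Submodule.prod_sup_prod, sup_bot_eq, bot_sup_eq]
  constructor
  · rw [hF]
    exact hli0.map' (Lmap σ) (Lmap_ker σ)
  · rw [hF, Set.range_comp, Submodule.span_image, hspan0]
    apply le_antisymm
    · rintro x ⟨⟨a, b⟩, ⟨ha, hb⟩, rfl⟩
      rw [Submodule.mem_inf, LinearMap.mem_ker, LinearMap.mem_ker,
        Matrix.mulVecLin_apply, Matrix.mulVecLin_apply, mem_kers_iff σ Y hσ]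
      simp only [hK, SetLike.mem_coe, LinearMap.mem_ker, Matrix.mulVecLin_apply] at ha hb
      have h1 : (Lmap σ) (a, b) ∘ Sum.inl = a + b := rfl
      have h2 : (Lmap σ) (a, b) ∘ Sum.inr = b - a := rfl
      rw [h1, h2, Matrix.mulVec_add, Matrix.mulVec_sub, ha, hb]
      simp
    · intro x hx
      rw [Submodule.mem_inf, LinearMap.mem_ker, LinearMap.mem_ker,
        Matrix.mulVecLin_apply, Matrix.mulVecLin_apply, mem_kers_iff σ Y hσ] at hx
      obtain ⟨ha, hb⟩ := hx
      set a : σ.darts → ℝ := x ∘ Sum.inl with hadef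
      set b : σ.darts → ℝ := x ∘ Sum.inr with hbdef
      have haK : a ∈ K := by rw [hK, LinearMap.mem_ker, Matrix.mulVecLin_apply]; exact ha
      have hbK : b ∈ K := by rw [hK, LinearMap.mem_ker, Matrix.mulVecLin_apply]; exact hb
      refine ⟨((1/2 : ℝ) • (a - b), (1/2 : ℝ) • (a + b)), ⟨?_, ?_⟩, ?_⟩
      · exact K.smul_mem _ (K.sub_mem haK hbK)
      · exact K.smul_mem _ (K.add_mem haK hbK)
      · funext d
        cases d with
        | inl d => show (1/2 : ℝ) * (a d - b d) + (1/2 : ℝ) * (a d + b d) = x (Sum.inl d); ring_nf; rfl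
        | inr d => show (1/2 : ℝ) * (a d + b d) - (1/2 : ℝ) * (a d - b d) = x (Sum.inr d); ring_nf; rfl
end

section
/- For a k-regular graph G with digraph X, the transition matrix U = (2/k)·D_t(X)ᵀ·D_h(X) − P is unitary (indeed real orthogonal), where P is the arc-reversal permutation matrix. -/
open Matrix Module LinearMap

variable {V : Type*} [Fintype V] [DecidableEq V]

lemma tail_count (G : SimpleGraph V) [DecidableRel G.Adj] {k : ℕ}
    (hreg : G.IsRegularOfDegree k) (v : V) :
    ∑ e : G.Dart, (if e.toProd.1 = v then (1:ℝ) else 0) = k := by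
  rw [Finset.sum_boole]; norm_num
  rw [G.dart_fst_fiber_card_eq_degree v, hreg v]

lemma head_count (G : SimpleGraph V) [DecidableRel G.Adj] {k : ℕ}
    (hreg : G.IsRegularOfDegree k) (v : V) :
    ∑ e : G.Dart, (if e.toProd.2 = v then (1:ℝ) else 0) = k := by
  have := Fintype.sum_equiv (Function.Involutive.toPerm _ (fun d : G.Dart => d.symm_symm))
    (fun e : G.Dart => if e.toProd.2 = v then (1:ℝ) else 0)
    (fun e : G.Dart => if e.toProd.1 = v then (1:ℝ) else 0) (fun e => rfl)
  exact this.trans (tail_count G hreg v)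

lemma head_count' (G : SimpleGraph V) [DecidableRel G.Adj] {k : ℕ}
    (hreg : G.IsRegularOfDegree k) (v : V) :
    ∑ e : G.Dart, (if v = e.toProd.2 then (1:ℝ) else 0) = k := by
  rw [← head_count G hreg v]
  exact Finset.sum_congr rfl fun e _ => by simp only [eq_comm]

lemma Mt_apply (G : SimpleGraph V) [DecidableRel G.Adj] (d e : G.Dart) :
    ((Dt G)ᵀ * Dh G) d e = if d.toProd.1 = e.toProd.2 then 1 else 0 := by
  simp only [Matrix.mul_apply, Dt, Dh, transpose_apply, Matrix.of_apply,
    ite_mul, one_mul, zero_mul]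
  rw [Finset.sum_ite_eq Finset.univ d.toProd.1 (fun v => if e.toProd.2 = v then (1:ℝ) else 0)]
  simp [eq_comm]

lemma U_apply (G : SimpleGraph V) [DecidableRel G.Adj] (k : ℕ) (d e : G.Dart) :
    ((2 / (k : ℝ)) • ((Dt G)ᵀ * Dh G) - Pmat G) d e
      = (2 / (k:ℝ)) * (if d.toProd.1 = e.toProd.2 then 1 else 0)
        - (if d = e.symm then 1 else 0) := by
  simp [Matrix.sub_apply, Matrix.smul_apply, Mt_apply, Pmat, smul_eq_mul]

lemma key (G : SimpleGraph V) [DecidableRel G.Adj] {k : ℕ} (hk : 1 ≤ k)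
    (hreg : G.IsRegularOfDegree k) :
    ((2 / (k : ℝ)) • ((Dt G)ᵀ * Dh G) - Pmat G) *
        ((2 / (k : ℝ)) • ((Dt G)ᵀ * Dh G) - Pmat G)ᵀ = 1 := by
  have hk0 : (k:ℝ) ≠ 0 := Nat.cast_ne_zero.mpr (by omega)
  ext d f
  rw [Matrix.mul_apply]
  simp only [transpose_apply, U_apply]
  set a : G.Dart → ℝ := fun e => if d.toProd.1 = e.toProd.2 then 1 else 0 with ha
  set c : G.Dart → ℝ := fun e => if f.toProd.1 = e.toProd.2 then 1 else 0 with hc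
  set b : G.Dart → ℝ := fun e => if d = e.symm then 1 else 0 with hb
  set p : G.Dart → ℝ := fun e => if f = e.symm then 1 else 0 with hp
  have SA : ∑ e : G.Dart, a e * c e = if d.toProd.1 = f.toProd.1 then (k:ℝ) else 0 := by
    by_cases h : d.toProd.1 = f.toProd.1
    · rw [if_pos h, ← head_count' G hreg d.toProd.1]
      refine Finset.sum_congr rfl fun e _ => ?_
      simp only [ha, hc, ← h]
      by_cases h2 : d.toProd.1 = e.toProd.2 <;> simp [h2]
    · rw [if_neg h]
      refine Finset.sum_eq_zero fun e _ => ?_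
      simp only [ha, hc]
      by_cases h2 : d.toProd.1 = e.toProd.2
      · rw [if_pos h2, if_neg (fun hf => h (h2.trans hf.symm)), mul_zero]
      · rw [if_neg h2, zero_mul]
  have SB : ∑ e : G.Dart, a e * p e = if d.toProd.1 = f.toProd.1 then (1:ℝ) else 0 := by
    have step : ∀ e : G.Dart, a e * p e = if e = f.symm then a e else 0 := by
      intro e
      by_cases h : e = f.symm
      · subst h
        simp [hp, f.symm_symm]
      · have h2 : f ≠ e.symm := fun hf => h (by rw [hf, e.symm_symm])
        simp [hp, h, h2]
    rw [Finset.sum_congr rfl (fun e _ => step e), Finset.sum_ite_eq' Finset.univ f.symm a]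
    simp [ha, SimpleGraph.Dart.symm_toProd]
  have SC : ∑ e : G.Dart, b e * c e = if d.toProd.1 = f.toProd.1 then (1:ℝ) else 0 := by
    have step : ∀ e : G.Dart, b e * c e = if e = d.symm then c e else 0 := by
      intro e
      by_cases h : e = d.symm
      · subst h
        simp [hb, d.symm_symm]
      · have h2 : d ≠ e.symm := fun hf => h (by rw [hf, e.symm_symm])
        simp [hb, h, h2]
    rw [Finset.sum_congr rfl (fun e _ => step e), Finset.sum_ite_eq' Finset.univ d.symm c]
    simp [hc, SimpleGraph.Dart.symm_toProd, eq_comm]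
  have SD : ∑ e : G.Dart, b e * p e = if d = f then (1:ℝ) else 0 := by
    have step : ∀ e : G.Dart, b e * p e = if e = d.symm then p e else 0 := by
      intro e
      by_cases h : e = d.symm
      · subst h
        simp [hb, d.symm_symm]
      · have h2 : d ≠ e.symm := fun hf => h (by rw [hf, e.symm_symm])
        simp [hb, h, h2]
    rw [Finset.sum_congr rfl (fun e _ => step e), Finset.sum_ite_eq' Finset.univ d.symm p]
    simp only [hp, SimpleGraph.Dart.symm_symm]
    by_cases h : d = f
    · simp [h]
    · simp [h, Ne.symm h]
  calc ∑ e : G.Dart, ((2/(k:ℝ)) * a e - b e) * ((2/(k:ℝ)) * c e - p e)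
      = ∑ e : G.Dart, ((4/(k:ℝ)^2) * (a e * c e) - (2/(k:ℝ)) * (a e * p e)
          - ((2/(k:ℝ)) * (b e * c e) - b e * p e)) :=
        Finset.sum_congr rfl fun e _ => by ring
    _ = (4/(k:ℝ)^2) * (∑ e : G.Dart, a e * c e) - (2/(k:ℝ)) * (∑ e : G.Dart, a e * p e)
          - ((2/(k:ℝ)) * (∑ e : G.Dart, b e * c e) - ∑ e : G.Dart, b e * p e) := by
        rw [Finset.sum_sub_distrib, Finset.sum_sub_distrib, Finset.sum_sub_distrib,
          ← Finset.mul_sum, ← Finset.mul_sum, ← Finset.mul_sum]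
    _ = (1 : Matrix G.Dart G.Dart ℝ) d f := by
        rw [SA, SB, SC, SD, Matrix.one_apply]
        by_cases h : d = f
        · subst h
          simp only [if_pos rfl]
          field_simp
          simp only [↓reduceIte]
          ring
        · rw [if_neg h]
          by_cases h1 : d.toProd.1 = f.toProd.1 <;> simp [h1] <;> field_simp <;> ring


theorem stmt13 (G : SimpleGraph V) [DecidableRel G.Adj] {k : ℕ} (hk : 1 ≤ k)
    (hreg : G.IsRegularOfDegree k) :
    ((2 / (k : ℝ)) • ((Dt G)ᵀ * Dh G) - Pmat G) *
        ((2 / (k : ℝ)) • ((Dt G)ᵀ * Dh G) - Pmat G)ᵀ = 1 ∧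
    ((2 / (k : ℝ)) • ((Dt G)ᵀ * Dh G) - Pmat G)ᵀ *
        ((2 / (k : ℝ)) • ((Dt G)ᵀ * Dh G) - Pmat G) = 1 := by
  have h1 := key G hk hreg
  exact ⟨h1, mul_eq_one_comm.mp h1⟩
end

section
/- For a connected non-bipartite graph G with n vertices and m edges, the subspace ker(D_t(X)) ∩ ker(D_h(X)) of ℝ^{2m}, where X is the digraph of G, has dimension 2(m − n) + 1. -/
open Matrix Module LinearMap

variable {V : Type*} [Fintype V] [DecidableEq V]

lemma constant_of_adj {G : SimpleGraph V} (hconn : G.Connected) (p : V → ℝ)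
    (h : ∀ u v, G.Adj u v → p u = p v) : ∀ u v, p u = p v := by
  intro u v
  obtain ⟨w⟩ := hconn u v
  induction w with
  | nil => rfl
  | cons hadj _ ih => exact (h _ _ hadj).trans ih

theorem stmt17 (G : SimpleGraph V) [DecidableRel G.Adj]
    (hconn : G.Connected) (hnb : ¬ G.Colorable 2)
    (n m : ℕ) (hn : n = Fintype.card V) (hm : m = G.edgeFinset.card) :
    (Module.finrank ℝ
        ↥(LinearMap.ker (Dt G).mulVecLin ⊓ LinearMap.ker (Dh G).mulVecLin) : ℤ)
      = 2 * ((m : ℤ) - n) + 1 := by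
  classical
  set M : Matrix (V ⊕ V) G.Dart ℝ := Matrix.of (Sum.elim (Dt G) (Dh G)) with hMdef
  have hMvec : ∀ x : G.Dart → ℝ,
      M.mulVec x = Sum.elim ((Dt G).mulVec x) ((Dh G).mulVec x) := by
    intro x; funext s; cases s <;> rfl
  have hker : LinearMap.ker (Dt G).mulVecLin ⊓ LinearMap.ker (Dh G).mulVecLin
      = LinearMap.ker M.mulVecLin := by
    ext x
    simp only [Submodule.mem_inf, LinearMap.mem_ker, Matrix.mulVecLin_apply, hMvec]
    constructor
    · rintro ⟨h1, h2⟩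
      funext s
      cases s with
      | inl v => simp [h1]
      | inr v => simp [h2]
    · intro h
      constructor
      · funext v; exact congrFun h (Sum.inl v)
      · funext v; exact congrFun h (Sum.inr v)
  set w : V ⊕ V → ℝ := Sum.elim (fun _ => 1) (fun _ => -1) with hwdef
  have hMt : ∀ (y : V ⊕ V → ℝ) (d : G.Dart),
      Mᵀ.mulVec y d = y (Sum.inl d.toProd.1) + y (Sum.inr d.toProd.2) := by
    intro y d
    simp only [Matrix.mulVec, dotProduct, Fintype.sum_sum_type]
    show ∑ a, Dt G a d * y (Sum.inl a) + ∑ a, Dh G a d * y (Sum.inr a) = _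
    simp [Dt, Dh, ite_mul, Finset.sum_ite_eq]
  have hkerT : LinearMap.ker Mᵀ.mulVecLin = (Submodule.span ℝ {w}) := by
    apply le_antisymm
    · intro y hy
      simp only [LinearMap.mem_ker, Matrix.mulVecLin_apply] at hy
      have hy' : ∀ d : G.Dart, y (Sum.inl d.toProd.1) + y (Sum.inr d.toProd.2) = 0 := by
        intro d; rw [← hMt]; exact congrFun hy d
      have hadj : ∀ u v, G.Adj u v → y (Sum.inl u) + y (Sum.inr v) = 0 := by
        intro u v h; exact hy' (SimpleGraph.Dart.mk (u, v) h)
      set f : V → ℝ := fun v => y (Sum.inl v) with hf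
      set g : V → ℝ := fun v => y (Sum.inr v) with hg
      have hadj' : ∀ u v, G.Adj u v → f u + g v = 0 := hadj
      have hs : ∀ u v, G.Adj u v → f u + g u = -(f v + g v) := by
        intro u v h
        have h1 := hadj' u v h
        have h2 := hadj' v u h.symm
        linarith
      have hs0 : ∀ v, f v + g v = 0 := by
        by_contra hc
        push_neg at hc
        obtain ⟨v0, hv0⟩ := hc
        have habs : ∀ u v, |f u + g u| = |f v + g v| := by
          apply constant_of_adj hconn
          intro u v h; rw [hs u v h, abs_neg]
        have hne : ∀ v, f v + g v ≠ 0 := by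
          intro v hv
          apply hv0
          have h2 := habs v0 v
          rw [hv, abs_zero] at h2
          exact abs_eq_zero.mp h2
        refine hnb ⟨SimpleGraph.Coloring.mk
          (fun v => if 0 < f v + g v then (0 : Fin 2) else 1) ?_⟩
        intro u v h hcol
        have h1 : f u + g u = -(f v + g v) := hs u v h
        by_cases hp : 0 < f u + g u
        · have hq : ¬ 0 < f v + g v := by
            intro hq; linarith
          simp only [hp, hq, if_true, if_false] at hcol
          exact absurd hcol (by decide)
        · have hq : 0 < f v + g v := by
            rcases lt_trichotomy (f v + g v) 0 with h' | h' | h'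
            · exfalso; apply hp; linarith
            · exact absurd h' (hne v)
            · exact h'
          simp only [hp, hq, if_true, if_false] at hcol
          exact absurd hcol (by decide)
      have hfconst : ∀ u v, f u = f v := by
        apply constant_of_adj hconn
        intro u v h
        have h1 := hadj' u v h
        have h2 := hs0 v
        have h3 := hs0 u
        linarith
      obtain ⟨v0⟩ := hconn.nonempty
      rw [Submodule.mem_span_singleton]
      refine ⟨f v0, ?_⟩
      funext s
      cases s with
      | inl v =>
        have : (f v0 • w) (Sum.inl v) = f v0 * 1 := rfl
        rw [this, mul_one, hfconst v0 v]
      | inr v =>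
        have h1 : (f v0 • w) (Sum.inr v) = f v0 * (-1) := rfl
        have h2 := hs0 v
        have h3 := hfconst v0 v
        show (f v0 • w) (Sum.inr v) = g v
        rw [h1]; linarith
    · rw [Submodule.span_le, Set.singleton_subset_iff]
      simp only [SetLike.mem_coe, LinearMap.mem_ker, Matrix.mulVecLin_apply]
      funext d
      rw [hMt]
      simp [hwdef]
  have hwne : w ≠ 0 := by
    obtain ⟨v0⟩ := hconn.nonempty
    intro h
    have := congrFun h (Sum.inl v0)
    simp [hwdef] at this
  have hkTdim : Module.finrank ℝ (LinearMap.ker Mᵀ.mulVecLin) = 1 := by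
    rw [hkerT]; exact finrank_span_singleton hwne
  have rn1 : Mᵀ.rank + Module.finrank ℝ (LinearMap.ker Mᵀ.mulVecLin)
      = Fintype.card (V ⊕ V) := by
    rw [Matrix.rank, LinearMap.finrank_range_add_finrank_ker]
    simp [Module.finrank_fintype_fun_eq_card]
  have rn2 : M.rank + Module.finrank ℝ (LinearMap.ker M.mulVecLin)
      = Fintype.card G.Dart := by
    rw [Matrix.rank, LinearMap.finrank_range_add_finrank_ker]
    simp [Module.finrank_fintype_fun_eq_card]
  have hrt : Mᵀ.rank = M.rank := Matrix.rank_transpose M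
  have hcardD : Fintype.card G.Dart = 2 * m := by
    rw [hm]; exact G.dart_card_eq_twice_card_edges
  have hcardV : Fintype.card (V ⊕ V) = 2 * n := by
    simp [Fintype.card_sum, hn]; ring
  have e1 : M.rank + Module.finrank ℝ (LinearMap.ker M.mulVecLin) = 2 * m := by
    rw [rn2, hcardD]
  have e2 : M.rank + 1 = 2 * n := by
    rw [← hrt, ← hkTdim, rn1, hcardV]
  rw [hker]
  push_cast at e1 e2 ⊢
  omega
end

section
/- For a connected bipartite graph G with n vertices and m edges, the subspace ker(D_t(X)) ∩ ker(D_h(X)) of ℝ^{2m}, where X is the digraph of G, has dimension 2(m − n + 1), twice the dimension of the cycle space of G. -/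
open Matrix Module LinearMap

variable {V : Type*} [Fintype V] [DecidableEq V]

private lemma fin2cases (i : Fin 2) : i = 0 ∨ i = 1 := by
  fin_cases i <;> simp

theorem stmt18 (G : SimpleGraph V) [DecidableRel G.Adj]
    (hconn : G.Connected) (hbip : G.Colorable 2)
    (n m : ℕ) (hn : n = Fintype.card V) (hm : m = G.edgeFinset.card) :
    (Module.finrank ℝ
        ↥(LinearMap.ker (Dt G).mulVecLin ⊓ LinearMap.ker (Dh G).mulVecLin) : ℤ)
      = 2 * ((m : ℤ) - n + 1) := by
  classical
  haveI : Nonempty V := hconn.nonempty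
  obtain ⟨C⟩ := hbip
  obtain ⟨u0⟩ := ‹Nonempty V›
  set M : Matrix (V ⊕ V) G.Dart ℝ := Matrix.fromRows (Dt G) (Dh G) with hM
  -- identify the kernel with the kernel of the stacked matrix
  have hker : LinearMap.ker (Dt G).mulVecLin ⊓ LinearMap.ker (Dh G).mulVecLin
      = LinearMap.ker M.mulVecLin := by
    ext x
    simp only [Submodule.mem_inf, LinearMap.mem_ker, Matrix.mulVecLin_apply, hM,
      Matrix.fromRows_mulVec]
    constructor
    · rintro ⟨h1, h2⟩
      funext i
      cases i <;> simp [h1, h2]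
    · intro h
      constructor <;> funext v
      · simpa using congrFun h (Sum.inl v)
      · simpa using congrFun h (Sum.inr v)
  -- transpose action
  have hMt : ∀ (h : (V ⊕ V) → ℝ) (d : G.Dart),
      Mᵀ.mulVec h d = h (Sum.inl d.toProd.1) + h (Sum.inr d.toProd.2) := by
    intro h d
    simp [hM, Matrix.mulVec, dotProduct, Fintype.sum_sum_type,
      Matrix.fromRows_apply_inl, Matrix.fromRows_apply_inr, Dt, Dh, ite_mul]
  have hKmem : ∀ h : (V ⊕ V) → ℝ, h ∈ LinearMap.ker Mᵀ.mulVecLin ↔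
      ∀ d : G.Dart, h (Sum.inl d.toProd.1) + h (Sum.inr d.toProd.2) = 0 := by
    intro h
    rw [LinearMap.mem_ker]
    simp only [Matrix.mulVecLin_apply, funext_iff, Pi.zero_apply]
    exact forall_congr' fun d => by rw [hMt]
  -- the 2-dimensional parametrization of ker Mᵀ
  set W : Matrix (V ⊕ V) (Fin 2) ℝ :=
    Matrix.of (Sum.elim (fun v j => if C v = j then (1 : ℝ) else 0)
      (fun v j => if C v = j then 0 else -1)) with hW
  have hWl : ∀ (x : Fin 2 → ℝ) (v : V), W.mulVec x (Sum.inl v) = x (C v) := by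
    intro x v
    rcases fin2cases (C v) with h | h <;>
      simp [hW, Matrix.mulVec, dotProduct, Fin.sum_univ_two, h]
  have hWr : ∀ (x : Fin 2 → ℝ) (v : V),
      W.mulVec x (Sum.inr v) = if C v = 0 then -x 1 else -x 0 := by
    intro x v
    rcases fin2cases (C v) with h | h <;>
      simp [hW, Matrix.mulVec, dotProduct, Fin.sum_univ_two, h]
  have hWinj : Function.Injective W.mulVecLin := by
    rw [← LinearMap.ker_eq_bot, LinearMap.ker_eq_bot']
    intro x hx
    have e1 : W.mulVec x (Sum.inl u0) = 0 := by
      rw [← Matrix.mulVecLin_apply, hx]; rfl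
    have e2 : W.mulVec x (Sum.inr u0) = 0 := by
      rw [← Matrix.mulVecLin_apply, hx]; rfl
    rw [hWl] at e1
    rw [hWr] at e2
    funext j
    rcases fin2cases (C u0) with h | h <;> rw [h] at e1 e2 <;>
      simp only [if_pos rfl, reduceIte, Fin.one_eq_zero_iff, OfNat.ofNat_ne_one,
        if_false, neg_eq_zero] at e1 e2 <;>
      rcases fin2cases j with hj | hj <;> subst hj <;>
      simp_all
  have hrange : LinearMap.range W.mulVecLin = LinearMap.ker Mᵀ.mulVecLin := by
    apply le_antisymm
    · rintro _ ⟨x, rfl⟩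
      rw [hKmem]
      intro d
      have hne : C d.toProd.1 ≠ C d.toProd.2 := C.valid d.adj
      rw [Matrix.mulVecLin_apply, hWl, hWr]
      rcases fin2cases (C d.toProd.1) with h1 | h1 <;>
        rcases fin2cases (C d.toProd.2) with h2 | h2 <;>
        rw [h1, h2] at hne ⊢ <;> simp_all
    · intro h hh
      rw [hKmem] at hh
      have Q : ∀ u v, G.Adj u v → h (Sum.inl u) + h (Sum.inr v) = 0 :=
        fun u v huv => hh ⟨(u, v), huv⟩
      set x : Fin 2 → ℝ :=
        fun j => if C u0 = j then h (Sum.inl u0) else -h (Sum.inr u0) with hx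
      set Pred : V → Prop := fun v => h (Sum.inl v) = x (C v) ∧
          h (Sum.inr v) = (if C v = 0 then -x 1 else -x 0) with hPred
      have base : Pred u0 := by
        rcases fin2cases (C u0) with h0 | h0 <;>
          constructor <;> simp [hPred, hx, h0]
      have step : ∀ u v, G.Adj u v → Pred u → Pred v := by
        intro u v hadj hu
        obtain ⟨pu1, pu2⟩ := hu
        have e1 := Q u v hadj
        have e2 := Q v u hadj.symm
        have hne : C u ≠ C v := C.valid hadj
        rcases fin2cases (C u) with h1 | h1 <;> rcases fin2cases (C v) with h2 | h2 <;>
          rw [h1] at pu1 pu2 hne <;> rw [h2] at hne <;>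
          simp only [hPred, h2, if_pos rfl, reduceIte, Fin.one_eq_zero_iff,
            OfNat.ofNat_ne_one, if_false] at pu1 pu2 ⊢ <;>
          first
          | exact absurd rfl hne
          | exact ⟨by linarith, by linarith⟩
      have walkP : ∀ {a b : V} (p : G.Walk a b), Pred a → Pred b := by
        intro a b p
        induction p with
        | nil => exact id
        | cons hadj q ih => exact fun ha => ih (step _ _ hadj ha)
      have P : ∀ v, Pred v := fun v =>
        (hconn.preconnected u0 v).elim fun p => walkP p base
      refine ⟨x, funext fun i => ?_⟩
      rcases i with v | v
      · rw [Matrix.mulVecLin_apply, hWl]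
        exact ((P v).1).symm
      · rw [Matrix.mulVecLin_apply, hWr]
        exact ((P v).2).symm
  -- dimension count
  have hK2 : finrank ℝ (LinearMap.ker Mᵀ.mulVecLin) = 2 := by
    rw [← hrange, LinearMap.finrank_range_of_inj hWinj,
      Module.finrank_fintype_fun_eq_card, Fintype.card_fin]
  have rnM : Matrix.rank M + finrank ℝ (LinearMap.ker M.mulVecLin) = 2 * m := by
    have h0 := LinearMap.finrank_range_add_finrank_ker M.mulVecLin
    rw [Module.finrank_fintype_fun_eq_card, G.dart_card_eq_twice_card_edges, ← hm] at h0
    exact h0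
  have rnMt : Matrix.rank M + 2 = 2 * n := by
    have h0 := LinearMap.finrank_range_add_finrank_ker Mᵀ.mulVecLin
    rw [hK2, Module.finrank_fintype_fun_eq_card, Fintype.card_sum, ← hn] at h0
    have h1 : Mᵀ.rank = finrank ℝ (LinearMap.range Mᵀ.mulVecLin) := rfl
    have h2 := M.rank_transpose
    omega
  rw [hker]
  omega
end
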